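/- Assume that for every n ≥ 1 the compound return vector R_n and the next one-period return vector X(n) are independent. Then for every integer n > 1 and every portfolio weight K ∈ 𝒦, g_n(K) ≤ ((n−1)/n)·g_{n−1}* + (1/n)·g_1(K). -/

import Mathlib

open MeasureTheory ProbabilityTheory Filter Topology Finset Real

/-- Compound (total) return of asset `i` over the first `n` periods:
`R_{n,i}(ω) = ∏_{k=0}^{n-1} (1 + X_i(k)(ω))`. -/
noncomputable def compoundReturn {Ω : Type*} {m : ℕ} (X : ℕ → Ω → Fin m → ℝ)
    (n : ℕ) (ω : Ω) (i : Fin m) : ℝ :=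
  ∏ k ∈ Finset.range n, (1 + X k ω i)

/-- Expected logarithmic growth with rebalancing period `n`:
`g_n(K) = (1/n) E[log (Kᵀ R_n)]`. -/
noncomputable def elg {Ω : Type*} [MeasureSpace Ω] {m : ℕ} (X : ℕ → Ω → Fin m → ℝ)
    (n : ℕ) (K : Fin m → ℝ) : ℝ :=
  (n : ℝ)⁻¹ * ∫ ω, Real.log (∑ i, K i * compoundReturn X n ω i)

/-- The admissible set: the unit simplex in `ℝ^m`. -/
def simplex (m : ℕ) : Set (Fin m → ℝ) := {K | (∀ i, 0 ≤ K i) ∧ ∑ i, K i = 1}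

/-!
Since `R_n = R_{n-1} ⊙ (1 + X(n-1))`, the wealth `Kᵀ R_n` factors as `Kᵀ(1 + X(n-1)) · K'ᵀ R_{n-1}`,
where `K' = driftWeights K (1 + X(n-1))` are the weights of the buy-and-hold portfolio `K` after
the period-`(n-1)` returns. The logarithm of the first factor has expectation `g_1(K)` because the
periods are identically distributed. As `R_{n-1}` is independent of `X(n-1)`, the expectation of
the logarithm of the second factor can be computed by integrating over `R_{n-1}` with `X(n-1)`
frozen; `K'` then lies in the simplex, so this inner integral is at most `(n-1) g_{n-1}^*`.
-/

section Simplex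

variable {m : ℕ} {K : Fin m → ℝ}

lemma sum_mul_mem_of_mem_simplex {s : Set ℝ} (hs : Convex ℝ s) (hK : K ∈ simplex m)
    {r : Fin m → ℝ} (hr : ∀ i, r i ∈ s) : ∑ i, K i * r i ∈ s :=
  hs.sum_mem (fun i _ => hK.1 i) hK.2 fun i _ => hr i

lemma sum_mul_pos_of_mem_simplex (hK : K ∈ simplex m) {r : Fin m → ℝ} (hr : ∀ i, 0 < r i) :
    0 < ∑ i, K i * r i :=
  sum_mul_mem_of_mem_simplex (convex_Ioi 0) hK hr

noncomputable def driftWeights (K x : Fin m → ℝ) : Fin m → ℝ :=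
  fun i => K i * x i / ∑ j, K j * x j

lemma driftWeights_mem_simplex (hK : K ∈ simplex m) {x : Fin m → ℝ} (hx : ∀ i, 0 < x i) :
    driftWeights K x ∈ simplex m := by
  have hD := sum_mul_pos_of_mem_simplex hK hx
  refine ⟨fun i => div_nonneg (mul_nonneg (hK.1 i) (hx i).le) hD.le, ?_⟩
  simp only [driftWeights]
  rw [← Finset.sum_div, div_self hD.ne']

lemma log_sum_mul_mul_eq (hK : K ∈ simplex m) {r x : Fin m → ℝ} (hr : ∀ i, 0 < r i)
    (hx : ∀ i, 0 < x i) :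
    Real.log (∑ i, K i * (r i * x i)) =
      Real.log (∑ i, K i * x i) + Real.log (∑ i, driftWeights K x i * r i) := by
  have hD := sum_mul_pos_of_mem_simplex hK hx
  have hfactor : ∑ i, K i * (r i * x i) = (∑ i, K i * x i) * ∑ i, driftWeights K x i * r i := by
    simp only [driftWeights, Finset.mul_sum]
    refine Finset.sum_congr rfl fun i _ => ?_
    field_simp
  have hD' := sum_mul_pos_of_mem_simplex (driftWeights_mem_simplex hK hx) hr
  rw [hfactor, Real.log_mul hD.ne' hD'.ne']

end Simplex

section CompoundReturn

variable {Ω : Type*} {m : ℕ} {X : ℕ → Ω → Fin m → ℝ}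

lemma compoundReturn_one (ω : Ω) (i : Fin m) : compoundReturn X 1 ω i = 1 + X 0 ω i :=
  Finset.prod_range_one _

lemma compoundReturn_succ (n : ℕ) (ω : Ω) (i : Fin m) :
    compoundReturn X (n + 1) ω i = compoundReturn X n ω i * (1 + X n ω i) :=
  Finset.prod_range_succ _ _

lemma compoundReturn_mem_Icc {c C : ℝ} (hc : 0 ≤ c) {ω : Ω}
    (h : ∀ k i, 1 + X k ω i ∈ Set.Icc c C) (n : ℕ) (i : Fin m) :
    compoundReturn X n ω i ∈ Set.Icc (c ^ n) (C ^ n) := by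
  induction n with
  | zero => simp [compoundReturn]
  | succ n ih =>
    rw [compoundReturn_succ, pow_succ, pow_succ]
    have hR : 0 ≤ compoundReturn X n ω i := (pow_nonneg hc n).trans ih.1
    exact ⟨mul_le_mul ih.1 (h n i).1 hc hR,
      mul_le_mul ih.2 (h n i).2 (hc.trans (h n i).1) (hR.trans ih.2)⟩

lemma measurable_compoundReturn [MeasurableSpace Ω] (hX : ∀ k, Measurable (X k)) (n : ℕ) :
    Measurable fun ω => compoundReturn X n ω :=
  measurable_pi_lambda _ fun i => Finset.measurable_prod _ fun k _ =>
    measurable_const.add ((measurable_pi_apply i).comp (hX k))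

end CompoundReturn

section Probability

variable {Ω : Type*} [MeasurableSpace Ω]

lemma ProbabilityTheory.IndepFun.integral_comp_prodMk_le {α β : Type*} [MeasurableSpace α]
    [MeasurableSpace β] {μ : Measure Ω} [IsProbabilityMeasure μ] {Y : Ω → α} {Z : Ω → β}
    (hYZ : IndepFun Y Z μ) (hY : Measurable Y) (hZ : Measurable Z) {f : α × β → ℝ}
    (hf : Measurable f) (hfi : Integrable (fun ω => f (Y ω, Z ω)) μ) {c : ℝ}
    (hc : ∀ᵐ z ∂μ.map Z, ∫ ω, f (Y ω, z) ∂μ ≤ c) :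
    ∫ ω, f (Y ω, Z ω) ∂μ ≤ c := by
  have hmap := (indepFun_iff_map_prod_eq_prod_map_map hY.aemeasurable hZ.aemeasurable).1 hYZ
  have hfi' : Integrable f ((μ.map Y).prod (μ.map Z)) := by
    rw [← hmap]
    exact (integrable_map_measure hf.aestronglyMeasurable (hY.prodMk hZ).aemeasurable).2 hfi
  have hsection : ∀ z, ∫ y, f (y, z) ∂μ.map Y = ∫ ω, f (Y ω, z) ∂μ := fun z =>
    integral_map hY.aemeasurable (hf.comp measurable_prodMk_right).aestronglyMeasurable
  calc ∫ ω, f (Y ω, Z ω) ∂μ = ∫ z, ∫ ω, f (Y ω, z) ∂μ ∂μ.map Z := by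
        rw [← integral_map (hY.prodMk hZ).aemeasurable hf.aestronglyMeasurable, hmap,
          integral_prod_symm f hfi']
        simp only [hsection]
    _ ≤ ∫ _z, c ∂μ.map Z := by
        refine integral_mono_ae ?_ (integrable_const c) hc
        simpa only [hsection] using hfi'.integral_prod_right
    _ = c := by
        have := Measure.isProbabilityMeasure_map (μ := μ) hZ.aemeasurable
        simp

lemma exists_grossReturn_bounds {μ : Measure Ω} {m : ℕ} {X : ℕ → Ω → Fin m → ℝ}
    {Xmin Xmax : Fin m → ℝ} (hXmin : ∀ i, -1 < Xmin i)
    (hbdd : ∀ k, ∀ᵐ ω ∂μ, ∀ i, Xmin i ≤ X k ω i ∧ X k ω i ≤ Xmax i) :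
    ∃ c C : ℝ, 0 < c ∧ ∀ᵐ ω ∂μ, ∀ k i, 1 + X k ω i ∈ Set.Icc c C := by
  rcases isEmpty_or_nonempty (Fin m) with hm | hm
  · exact ⟨1, 1, one_pos, ae_of_all _ fun ω k i => isEmptyElim i⟩
  obtain ⟨i₀, hi₀⟩ := Finite.exists_min Xmin
  obtain ⟨i₁, hi₁⟩ := Finite.exists_max Xmax
  refine ⟨1 + Xmin i₀, 1 + Xmax i₁, by linarith [hXmin i₀], ?_⟩
  filter_upwards [ae_all_iff.2 hbdd] with ω h k i
  exact ⟨by linarith [hi₀ i, (h k i).1], by linarith [hi₁ i, (h k i).2]⟩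

lemma ae_compoundReturn_mem_Icc {μ : Measure Ω} {m : ℕ} {X : ℕ → Ω → Fin m → ℝ} {c C : ℝ}
    (hc : 0 ≤ c) (hX : ∀ᵐ ω ∂μ, ∀ k i, 1 + X k ω i ∈ Set.Icc c C) (n : ℕ) :
    ∀ᵐ ω ∂μ, ∀ i, compoundReturn X n ω i ∈ Set.Icc (c ^ n) (C ^ n) := by
  filter_upwards [hX] with ω h using compoundReturn_mem_Icc hc h n

lemma integrable_log_sum_mul_of_mem_simplex {μ : Measure Ω} [IsFiniteMeasure μ] {m : ℕ}
    {K : Fin m → ℝ} (hK : K ∈ simplex m) {r : Ω → Fin m → ℝ} (hr : Measurable r) {a b : ℝ}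
    (ha : 0 < a) (hrab : ∀ᵐ ω ∂μ, ∀ i, r ω i ∈ Set.Icc a b) :
    Integrable (fun ω => Real.log (∑ i, K i * r ω i)) μ := by
  refine .of_bound (Real.measurable_log.comp (by fun_prop)).aestronglyMeasurable
    (max |Real.log a| |Real.log b|) ?_
  filter_upwards [hrab] with ω hω
  have hs := sum_mul_mem_of_mem_simplex (convex_Icc a b) hK hω
  exact abs_le_max_abs_abs (Real.log_le_log ha hs.1) (Real.log_le_log (ha.trans_le hs.1) hs.2)


end Probability

section Growth

variable {Ω : Type*} [MeasureSpace Ω] {m : ℕ} {X : ℕ → Ω → Fin m → ℝ} {c C : ℝ}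

lemma elg_le_log [IsProbabilityMeasure (ℙ : Measure Ω)] (hmeas : ∀ k, Measurable (X k))
    (hc : 0 < c) (hX : ∀ᵐ ω ∂(ℙ : Measure Ω), ∀ k i, 1 + X k ω i ∈ Set.Icc c C) {n : ℕ} (hn : 0 < n)
    {K : Fin m → ℝ} (hK : K ∈ simplex m) : elg X n K ≤ Real.log C := by
  have hR := ae_compoundReturn_mem_Icc hc.le hX n
  have hint := integrable_log_sum_mul_of_mem_simplex hK (measurable_compoundReturn hmeas n)
    (pow_pos hc n) hR
  have hle : ∫ ω, Real.log (∑ i, K i * compoundReturn X n ω i) ≤ n * Real.log C :=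
    calc ∫ ω, Real.log (∑ i, K i * compoundReturn X n ω i)
        ≤ ∫ _ω, Real.log (C ^ n) := by
          refine integral_mono_ae hint (integrable_const _) ?_
          filter_upwards [hR] with ω hω
          have hs := sum_mul_mem_of_mem_simplex (convex_Icc _ _) hK hω
          exact Real.log_le_log ((pow_pos hc n).trans_le hs.1) hs.2
      _ = n * Real.log C := by simp [Real.log_pow]
  calc elg X n K ≤ (n : ℝ)⁻¹ * (n * Real.log C) := by rw [elg]; gcongr
    _ = Real.log C := inv_mul_cancel_left₀ (by positivity) _

lemma elg_one_eq_integral {q : ℕ} (hq : IdentDistrib (X q) (X 0) ℙ ℙ) (K : Fin m → ℝ) :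
    elg X 1 K = ∫ ω, Real.log (∑ i, K i * (1 + X q ω i)) := by
  have hg : Measurable fun x : Fin m → ℝ => Real.log (∑ i, K i * (1 + x i)) :=
    Real.measurable_log.comp (by fun_prop)
  simp only [elg, compoundReturn_one, Nat.cast_one, inv_one, one_mul]
  exact ((hq.comp hg).integral_eq).symm

lemma integral_log_sum_mul_compoundReturn_le_mul_sSup [IsProbabilityMeasure (ℙ : Measure Ω)]
    (hmeas : ∀ k, Measurable (X k)) (hc : 0 < c)
    (hX : ∀ᵐ ω ∂(ℙ : Measure Ω), ∀ k i, 1 + X k ω i ∈ Set.Icc c C) {n : ℕ} (hn : 0 < n)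
    {K : Fin m → ℝ} (hK : K ∈ simplex m) :
    ∫ ω, Real.log (∑ i, K i * compoundReturn X n ω i) ≤ n * sSup (elg X n '' simplex m) := by
  have hbdd : BddAbove (elg X n '' simplex m) :=
    ⟨Real.log C, by rintro _ ⟨K', hK', rfl⟩; exact elg_le_log hmeas hc hX hn hK'⟩
  calc ∫ ω, Real.log (∑ i, K i * compoundReturn X n ω i) = n * elg X n K :=
        (mul_inv_cancel_left₀ (by positivity) _).symm
    _ ≤ n * sSup (elg X n '' simplex m) := by
        gcongr
        exact le_csSup hbdd ⟨K, hK, rfl⟩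

lemma integral_log_sum_mul_compoundReturn_succ_le [IsProbabilityMeasure (ℙ : Measure Ω)]
    (hmeas : ∀ k, Measurable (X k)) (hc : 0 < c)
    (hX : ∀ᵐ ω ∂(ℙ : Measure Ω), ∀ k i, 1 + X k ω i ∈ Set.Icc c C) {q : ℕ} (hq : 0 < q)
    (hindep : IndepFun (fun ω => compoundReturn X q ω) (X q) ℙ) {K : Fin m → ℝ}
    (hK : K ∈ simplex m) :
    ∫ ω, Real.log (∑ i, K i * compoundReturn X (q + 1) ω i) ≤
      (∫ ω, Real.log (∑ i, K i * (1 + X q ω i))) + q * sSup (elg X q '' simplex m) := by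
  set f : (Fin m → ℝ) × (Fin m → ℝ) → ℝ :=
    fun z => Real.log (∑ i, driftWeights K (fun i => 1 + z.2 i) i * z.1 i)
  have hf : Measurable f := Real.measurable_log.comp (by unfold driftWeights; fun_prop)
  have hsplit : ∀ᵐ ω ∂(ℙ : Measure Ω), Real.log (∑ i, K i * compoundReturn X (q + 1) ω i) =
      Real.log (∑ i, K i * (1 + X q ω i)) + f (compoundReturn X q ω, X q ω) := by
    filter_upwards [hX] with ω h
    simp only [compoundReturn_succ]
    exact log_sum_mul_mul_eq hK
      (fun i => (pow_pos hc q).trans_le (compoundReturn_mem_Icc hc.le h q i).1)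
      (fun i => hc.trans_le (h q i).1)
  have hint_step := integrable_log_sum_mul_of_mem_simplex hK (r := fun ω i => 1 + X q ω i)
    (by fun_prop) hc (by filter_upwards [hX] with ω h using h q)
  have hint_succ := integrable_log_sum_mul_of_mem_simplex hK
    (measurable_compoundReturn hmeas (q + 1)) (pow_pos hc _) (ae_compoundReturn_mem_Icc hc.le hX _)
  have hfi : Integrable (fun ω => f (compoundReturn X q ω, X q ω)) ℙ :=
    (hint_succ.sub hint_step).congr
      (by filter_upwards [hsplit] with ω h; rw [Pi.sub_apply, h]; ring)
  have hsection : ∀ᵐ x ∂(ℙ : Measure Ω).map (X q),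
      ∫ ω, f (compoundReturn X q ω, x) ≤ q * sSup (elg X q '' simplex m) := by
    have hpos : ∀ᵐ x ∂(ℙ : Measure Ω).map (X q), ∀ i, 0 < 1 + x i :=
      (ae_map_iff (hmeas q).aemeasurable (by measurability)).2
        (by filter_upwards [hX] with ω h using fun i => hc.trans_le (h q i).1)
    filter_upwards [hpos] with x hx
    exact integral_log_sum_mul_compoundReturn_le_mul_sSup hmeas hc hX hq
      (driftWeights_mem_simplex hK hx)
  have hindep_le :=
    hindep.integral_comp_prodMk_le (measurable_compoundReturn hmeas q) (hmeas q) hf hfi hsection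
  rw [integral_congr_ae hsplit, integral_add hint_step hfi]
  linarith

end Growth

theorem elg_recursion_pointwise_general
    {Ω : Type*} [MeasureSpace Ω] [IsProbabilityMeasure (ℙ : Measure Ω)]
    {m : ℕ}
    (X : ℕ → Ω → Fin m → ℝ)
    (hmeas : ∀ k, Measurable (X k))
    (hident : ∀ k, IdentDistrib (X k) (X 0) ℙ ℙ)
    (Xmin Xmax : Fin m → ℝ)
    (hXmin : ∀ i, -1 < Xmin i)
    (hbdd : ∀ k, ∀ᵐ ω ∂(ℙ : Measure Ω), ∀ i, Xmin i ≤ X k ω i ∧ X k ω i ≤ Xmax i)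
    (hRindep : ∀ n : ℕ, 1 ≤ n →
      IndepFun (fun ω => compoundReturn X n ω) (X n) ℙ) :
    ∀ n : ℕ, 1 < n → ∀ K ∈ simplex m,
      elg X n K ≤
        (((n : ℝ) - 1) / n) * sSup (elg X (n - 1) '' simplex m) +
          (n : ℝ)⁻¹ * elg X 1 K := by
  intro n hn K hK
  obtain ⟨q, rfl⟩ : ∃ q, n = q + 1 := ⟨n - 1, by omega⟩
  obtain ⟨c, C, hc, hX⟩ := exists_grossReturn_bounds hXmin hbdd
  have hq : 0 < q := by omega
  have key := integral_log_sum_mul_compoundReturn_succ_le hmeas hc hX hq (hRindep q hq) hK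
  rw [← elg_one_eq_integral (hident q) K] at key
  calc elg X (q + 1) K
      ≤ ((q : ℝ) + 1)⁻¹ * (elg X 1 K + q * sSup (elg X q '' simplex m)) := by
        rw [elg]; push_cast; gcongr
    _ = _ := by
        rw [Nat.add_sub_cancel]
        push_cast
        field_simp
        ring

/-- Pointwise version of the recursion: under the independence hypothesis on `R_n` and `X(n)`,
for every `n > 1` and every `K` in the simplex, `g_n(K) ≤ ((n-1)/n) g_{n-1}^* + (1/n) g_1(K)`. -/
theorem elg_recursion_pointwise
    {Ω : Type*} [MeasureSpace Ω] [IsProbabilityMeasure (ℙ : Measure Ω)]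
    {m : ℕ} (hm : 2 ≤ m)
    (X : ℕ → Ω → Fin m → ℝ)
    (hmeas : ∀ k, Measurable (X k))
    (hiid : iIndepFun X ℙ)
    (hident : ∀ k, IdentDistrib (X k) (X 0) ℙ ℙ)
    (Xmin Xmax : Fin m → ℝ)
    (hXmin : ∀ i, -1 < Xmin i)
    (hbdd : ∀ k, ∀ᵐ ω ∂(ℙ : Measure Ω), ∀ i, Xmin i ≤ X k ω i ∧ X k ω i ≤ Xmax i)
    (hRindep : ∀ n : ℕ, 1 ≤ n →
      IndepFun (fun ω => compoundReturn X n ω) (X n) ℙ) :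
    ∀ n : ℕ, 1 < n → ∀ K ∈ simplex m,
      elg X n K ≤
        (((n : ℝ) - 1) / n) * sSup (elg X (n - 1) '' simplex m) +
          (n : ℝ)⁻¹ * elg X 1 K :=
  elg_recursion_pointwise_general X hmeas hident Xmin Xmax hXmin hbdd hRindep
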